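/- Let E ⊆ ℝ be a set that is bounded below and has no accumulation point in ℝ. Define Σ(E) = {s ∈ [0,∞) : there exists τ ∈ ℝ with z(z+1) ∈ E, where z = s - 1/2 + iτ}. Then Σ(E) has no accumulation point in ℝ (it is a discrete subset of [0,∞)); moreover, if E is infinite then Σ(E) is nonempty. -/
import Mathlib


open Set Complex

lemma key (s τ e : ℝ) :
    ((s : ℂ) - 1 / 2 + τ * I) * ((s : ℂ) - 1 / 2 + τ * I + 1) = (e : ℂ) ↔
    (s - 1/2) * (s + 1/2) - τ^2 = e ∧ (s = 0 ∨ τ = 0) := by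
  rw [Complex.ext_iff]
  simp only [Complex.add_re, Complex.add_im, Complex.mul_re, Complex.mul_im,
    Complex.sub_re, Complex.sub_im, Complex.ofReal_re, Complex.ofReal_im,
    Complex.I_re, Complex.I_im, Complex.one_re, Complex.one_im,
    Complex.div_ofNat_re, Complex.div_ofNat_im]
  norm_num
  constructor
  · rintro ⟨h1, h2⟩
    refine ⟨by nlinarith, ?_⟩
    have h3 : s * τ = 0 := by linarith
    exact mul_eq_zero.1 h3
  · rintro ⟨h1, h2⟩
    refine ⟨by nlinarith, ?_⟩
    rcases h2 with h | h <;> subst h <;> ring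

/-- `Σ(E)`: the set of `s ∈ [0,∞)` such that `z(z+1) ∈ E` for some `τ ∈ ℝ`,
where `z = s - 1/2 + iτ` and `E ⊆ ℝ ⊆ ℂ`. -/
def SigmaE (E : Set ℝ) : Set ℝ :=
  {s : ℝ | 0 ≤ s ∧ ∃ τ : ℝ,
    ((s : ℂ) - 1 / 2 + τ * I) * ((s : ℂ) - 1 / 2 + τ * I + 1) ∈ (fun r : ℝ => (r : ℂ)) '' E}

lemma sigma_sub (E : Set ℝ) : SigmaE E ⊆ {0} ∪ {s : ℝ | 0 ≤ s ∧ s^2 - 1/4 ∈ E} := by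
  rintro s ⟨hs, τ, e, he, heq⟩
  simp only [] at heq
  rw [eq_comm, key] at heq
  obtain ⟨h1, h2 | h2⟩ := heq
  · exact Or.inl h2
  · subst h2
    refine Or.inr ⟨hs, ?_⟩
    have : s^2 - 1/4 = e := by linarith [h1]
    rw [this]; exact he

lemma no_acc_S (E : Set ℝ) (hacc : ∀ x : ℝ, ¬ AccPt x (Filter.principal E)) (x : ℝ) :
    ¬ AccPt x (Filter.principal {s : ℝ | 0 ≤ s ∧ s^2 - 1/4 ∈ E}) := by
  intro h
  rw [accPt_iff_nhds] at h
  have hx : 0 ≤ x := by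
    by_contra hx
    push_neg at hx
    obtain ⟨y, ⟨hy1, hy2, _⟩, _⟩ := h (Set.Iio 0) (Iio_mem_nhds hx)
    rw [Set.mem_Iio] at hy1
    linarith
  apply hacc (x^2 - 1/4)
  rw [accPt_iff_nhds]
  intro U hU
  have hc : Continuous (fun s : ℝ => s^2 - 1/4) := by continuity
  have hpre : (fun s : ℝ => s^2 - 1/4) ⁻¹' U ∈ nhds x := hc.continuousAt.preimage_mem_nhds hU
  obtain ⟨y, ⟨hyU, hy0, hyE⟩, hyx⟩ := h _ hpre
  refine ⟨y^2 - 1/4, ⟨hyU, hyE⟩, ?_⟩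
  intro hh
  have : y^2 = x^2 := by linarith
  exact hyx (by nlinarith)

/-- if `E ⊆ ℝ` is bounded below and has no accumulation point in `ℝ`, then
`Σ(E)` has no accumulation point in `ℝ`; moreover, if `E` is infinite then `Σ(E)` is
nonempty. -/
theorem stmt5 (E : Set ℝ) (hbdd : BddBelow E)
    (hacc : ∀ x : ℝ, ¬ AccPt x (Filter.principal E)) :
    (∀ x : ℝ, ¬ AccPt x (Filter.principal (SigmaE E))) ∧
      (E.Infinite → (SigmaE E).Nonempty) := by
  constructor
  · intro x hx
    have h1 : AccPt x (Filter.principal ({0} ∪ {s : ℝ | 0 ≤ s ∧ s^2 - 1/4 ∈ E})) :=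
      hx.mono (Filter.principal_mono.2 (sigma_sub E))
    rw [Set.union_comm, ← Filter.sup_principal, accPt_sup] at h1
    rcases h1 with h1 | h1
    · exact no_acc_S E hacc x h1
    · rw [accPt_iff_nhds] at h1
      obtain ⟨y, ⟨hyU, hy0⟩, hyx⟩ := h1 ({x} ∪ {0}ᶜ)
        (by
          rcases eq_or_ne x 0 with rfl | hne
          · exact Filter.mem_of_superset (Filter.univ_mem)
              (by intro z _; by_cases hz : z = 0 <;> simp [hz])
          · exact Filter.mem_of_superset (compl_singleton_mem_nhds hne)
              (by intro z hz; exact Or.inr hz))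
      rcases hyU with hyU | hyU
      · exact hyx hyU
      · exact hyU hy0
  · intro hE
    have : ∃ e ∈ E, -1/4 ≤ e := by
      by_contra hcon
      push_neg at hcon
      obtain ⟨m, hm⟩ := hbdd
      have hsub : E ⊆ Set.Icc m (-1/4) := fun e he => ⟨hm he, (hcon e he).le⟩
      obtain ⟨z, _, hz⟩ := hE.exists_accPt_of_subset_isCompact isCompact_Icc hsub
      exact hacc z hz
    obtain ⟨e, he, hle⟩ := this
    refine ⟨Real.sqrt (e + 1/4), Real.sqrt_nonneg _, 0, e, he, ?_⟩
    show (e : ℂ) = _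
    rw [eq_comm, key]
    have h4 : Real.sqrt (e + 1/4) ^ 2 = e + 1/4 := Real.sq_sqrt (by linarith)
    constructor
    · nlinarith [h4]
    · right; rfl
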